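/- Let v_0, v_1, … be formal variables. There exists a unique sequence of formal power series w_0, w_1, … ∈ ℂ[[v_0, v_1, …]] such that the Laurent series y = (1/√2) ∑_{n≥0}(v_n − δ_{n,1}) z^n + √2/z + √2 ∑_{n≥0} w_n z^{−n−2} satisfies (y²)_− = (1/z + ∑_{n≥0} w_n z^{−n−2})², where (·)_− denotes the part with strictly negative powers of z. -/

import Mathlib

/-!
Write `y = a/√2 + √2 u`, where `a = ∑_{n≥0} (v_n − δ_{n,1}) zⁿ` and `u = 1/z + ∑ w_n z^{−n−2}`.
Since `a²` has no negative powers, `(y²)_− = 2 (a u)_− + 2 (u²)_−`, so the condition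
`(y²)_− = (u²)_−` at `z^{−j−1}` reads `w_j = ∑_k v_k u_{−j−1−k} + ½ (u²)_{−j−1}`. The `v^d`
coefficient of the right-hand side only involves `v^e`-coefficients of those `w_i` with `e < d`
(the linear term carries a factor `v_k`), or with `e ≤ d` and `i < j`. This order on pairs `(e, i)`
is well founded, so the fixed-point equation has exactly one solution.
-/

open MvPowerSeries

noncomputable instance : TopologicalSpace (MvPowerSeries ℕ ℂ) :=
  Pi.topologicalSpace

/-- The coefficients (in `ℂ[[v₀,v₁,…]]`, with `v_n = MvPowerSeries.X n`) of the
formal Laurent series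
`y = (1/√2) ∑_{n≥0} (v_n − δ_{n,1}) z^n + √2/z + √2 ∑_{n≥0} w_n z^{−n−2}`,
as a function of the exponent of `z`. -/
noncomputable def yCoeff (w : ℕ → MvPowerSeries ℕ ℂ) (n : ℤ) : MvPowerSeries ℕ ℂ :=
  if 0 ≤ n then
    ((Real.sqrt 2 : ℂ))⁻¹ • (MvPowerSeries.X n.toNat - if n = 1 then 1 else 0)
  else if n = -1 then (Real.sqrt 2 : ℂ) • 1
  else (Real.sqrt 2 : ℂ) • w (n.natAbs - 2)

/-- The coefficients of the principal-part series `1/z + ∑_{n≥0} w_n z^{−n−2}`. -/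
noncomputable def uCoeff (w : ℕ → MvPowerSeries ℕ ℂ) (n : ℤ) : MvPowerSeries ℕ ℂ :=
  if n = -1 then 1 else if n ≤ -2 then w (n.natAbs - 2) else 0

theorem WellFounded.existsUnique_fixedPoint {ι α : Type*} [Nonempty α] {r : ι → ι → Prop}
    (hr : WellFounded r) (Φ : (ι → α) → ι → α)
    (hΦ : ∀ f g i, (∀ j, r j i → f j = g j) → Φ f i = Φ g i) : ∃! f, Φ f = f := by
  classical
  let f : ι → α := hr.fix fun i rec =>
    Φ (fun j => if h : r j i then rec j h else Classical.arbitrary α) i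
  have hf : ∀ i, f i = Φ f i := fun i =>
    (hr.fix_eq _ i).trans (hΦ _ _ i fun j hj => dif_pos hj)
  refine ⟨f, funext fun i => (hf i).symm, fun g hg => funext fun i => ?_⟩
  induction i using hr.induction with
  | _ i ih => rw [← hg, hf i]; exact hΦ g f i ih

theorem Finsupp.tsub_single_one_lt {σ : Type*} {d : σ →₀ ℕ} {k : σ} (hk : k ∈ d.support) :
    d - Finsupp.single k 1 < d := by
  refine lt_of_le_of_ne tsub_le_self fun h => ?_
  have hdk := DFunLike.congr_fun h k
  rw [Finsupp.mem_support_iff] at hk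
  simp only [Finsupp.coe_tsub, Pi.sub_apply, Finsupp.single_eq_same] at hdk
  omega

namespace MvPowerSeries

variable {σ R ι : Type*} [Semiring R]

theorem coeff_X_mul [DecidableEq σ] (k : σ) (φ : MvPowerSeries σ R) (d : σ →₀ ℕ) :
    coeff d (X k * φ) = if k ∈ d.support then coeff (d - Finsupp.single k 1) φ else 0 := by
  rw [X, coeff_monomial_mul, one_mul]
  refine if_congr ?_ rfl rfl
  rw [Finsupp.single_le_iff, Finsupp.mem_support_iff]
  omega

open WithPiTopology

variable [TopologicalSpace R]

theorem summable_of_coeff_ne_finset_zero {f : ι → MvPowerSeries σ R} {s : (σ →₀ ℕ) → Finset ι}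
    (hf : ∀ d, ∀ i ∉ s d, coeff d (f i) = 0) : Summable f :=
  summable_iff_summable_coeff.mpr fun d => summable_of_ne_finset_zero (hf d)

theorem coeff_tsum_of_coeff_ne_finset_zero [T2Space R] {f : ι → MvPowerSeries σ R}
    {s : (σ →₀ ℕ) → Finset ι} (hf : ∀ d, ∀ i ∉ s d, coeff d (f i) = 0) (d : σ →₀ ℕ) :
    coeff d (∑' i, f i) = ∑ i ∈ s d, coeff d (f i) :=
  (tsum_apply (summable_of_coeff_ne_finset_zero hf)).trans (tsum_eq_sum (hf d))

theorem summable_X_mul [DecidableEq σ] (g : σ → MvPowerSeries σ R) :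
    Summable fun k => X k * g k :=
  summable_of_coeff_ne_finset_zero (s := Finsupp.support) fun _ k hk => by
    rw [coeff_X_mul, if_neg hk]

theorem coeff_tsum_X_mul [DecidableEq σ] [T2Space R] (g : σ → MvPowerSeries σ R) (d : σ →₀ ℕ) :
    coeff d (∑' k, X k * g k) = ∑ k ∈ d.support, coeff (d - Finsupp.single k 1) (g k) := by
  rw [coeff_tsum_of_coeff_ne_finset_zero (s := Finsupp.support) fun _ k hk => by
    rw [coeff_X_mul, if_neg hk]]
  exact Finset.sum_congr rfl fun k hk => by rw [coeff_X_mul, if_pos hk]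

end MvPowerSeries

noncomputable instance : T2Space (MvPowerSeries ℕ ℂ) :=
  inferInstanceAs (T2Space ((ℕ →₀ ℕ) → ℂ))

noncomputable instance : IsTopologicalAddGroup (MvPowerSeries ℕ ℂ) :=
  inferInstanceAs (IsTopologicalAddGroup ((ℕ →₀ ℕ) → ℂ))

namespace SpecialDeformation

noncomputable def regularCoeff (n : ℤ) : MvPowerSeries ℕ ℂ :=
  if 0 ≤ n then X n.toNat - if n = 1 then 1 else 0 else 0

theorem yCoeff_eq (w : ℕ → MvPowerSeries ℕ ℂ) (n : ℤ) :
    yCoeff w n = (Real.sqrt 2 : ℂ)⁻¹ • regularCoeff n + (Real.sqrt 2 : ℂ) • uCoeff w n := by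
  unfold yCoeff regularCoeff uCoeff
  split_ifs <;> first | omega | simp

theorem uCoeff_of_nonneg (w : ℕ → MvPowerSeries ℕ ℂ) {n : ℤ} (hn : 0 ≤ n) : uCoeff w n = 0 := by
  rw [uCoeff, if_neg (by omega), if_neg (by omega)]

theorem uCoeff_neg_sub_two (w : ℕ → MvPowerSeries ℕ ℂ) (j : ℕ) :
    uCoeff w (-(j + 1 : ℤ) - 1) = w j := by
  rw [uCoeff, if_neg (by omega), if_pos (by omega)]
  congr 1

theorem regularCoeff_mul_regularCoeff {m : ℤ} (hm : m < 0) (p : ℤ) :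
    regularCoeff p * regularCoeff (m - p) = 0 := by
  unfold regularCoeff
  split_ifs <;> first | omega | simp

theorem yCoeff_mul_yCoeff (w : ℕ → MvPowerSeries ℕ ℂ) {m : ℤ} (hm : m < 0) (p : ℤ) :
    yCoeff w p * yCoeff w (m - p) =
      regularCoeff p * uCoeff w (m - p) + regularCoeff (m - p) * uCoeff w p
        + (2 : ℂ) • (uCoeff w p * uCoeff w (m - p)) := by
  have hs : (Real.sqrt 2 : ℂ) ≠ 0 := by exact_mod_cast (by positivity : Real.sqrt 2 ≠ 0)
  have hs2 : (Real.sqrt 2 : ℂ) * Real.sqrt 2 = 2 := by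
    exact_mod_cast Real.mul_self_sqrt zero_le_two
  rw [yCoeff_eq, yCoeff_eq, add_mul, mul_add, mul_add, smul_mul_smul_comm, smul_mul_smul_comm,
    smul_mul_smul_comm, smul_mul_smul_comm, regularCoeff_mul_regularCoeff hm, inv_mul_cancel₀ hs,
    mul_inv_cancel₀ hs, hs2, smul_zero, one_smul, one_smul, zero_add, mul_comm (uCoeff w p),
    add_assoc]

theorem hasSum_regularCoeff_mul (f : ℤ → MvPowerSeries ℕ ℂ) :
    HasSum (fun p => regularCoeff p * f p) (∑' k : ℕ, X k * f k - f 1) := by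
  have hℕ : HasSum (fun k : ℕ => regularCoeff k * f k) (∑' k : ℕ, X k * f k - f 1) := by
    have hX : Summable fun k : ℕ => X k * f k := MvPowerSeries.summable_X_mul _
    have hreg (k : ℕ) : regularCoeff k * f k = X k * f k - if k = 1 then f 1 else 0 := by
      simp only [regularCoeff, Nat.cast_nonneg, if_true, Int.toNat_natCast, Nat.cast_eq_one,
        sub_mul]
      split_ifs <;> simp_all
    simpa only [hreg] using hX.hasSum.sub (hasSum_ite_eq 1 (f 1))
  refine (Nat.cast_injective.hasSum_iff fun p hp => ?_).mp hℕ
  rw [regularCoeff, if_neg fun h => hp ⟨p.toNat, Int.toNat_of_nonneg h⟩, zero_mul]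

theorem hasSum_uCoeff_mul_uCoeff (w : ℕ → MvPowerSeries ℕ ℂ) (m : ℤ) :
    HasSum (fun p => uCoeff w p * uCoeff w (m - p))
      (∑ p ∈ Finset.Ioo m 0, uCoeff w p * uCoeff w (m - p)) := by
  refine hasSum_sum_of_ne_finset_zero fun p hp => ?_
  rcases le_or_gt 0 p with h | h
  · rw [uCoeff_of_nonneg w h, zero_mul]
  · have : 0 ≤ m - p := by rw [Finset.mem_Ioo] at hp; omega
    rw [uCoeff_of_nonneg w this, mul_zero]

theorem tsum_yCoeff_mul_yCoeff (w : ℕ → MvPowerSeries ℕ ℂ) {m : ℤ} (hm : m < 0) :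
    ∑' p, yCoeff w p * yCoeff w (m - p) =
      (2 : ℂ) • (∑' k : ℕ, X k * uCoeff w (m - k) - uCoeff w (m - 1))
        + (2 : ℂ) • ∑' p, uCoeff w p * uCoeff w (m - p) := by
  have hreg := hasSum_regularCoeff_mul fun p => uCoeff w (m - p)
  have hreg_swap : HasSum (fun p => regularCoeff (m - p) * uCoeff w p)
      (∑' k : ℕ, X k * uCoeff w (m - k) - uCoeff w (m - 1)) := by
    refine (Equiv.subLeft m).hasSum_iff.mp ?_
    simpa [Function.comp_def] using hreg
  have huu := hasSum_uCoeff_mul_uCoeff w m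
  rw [huu.tsum_eq]
  refine HasSum.tsum_eq ?_
  convert (hreg.add hreg_swap).add (huu.add huu) using 1 <;>
    simp only [yCoeff_mul_yCoeff w hm, two_smul]

theorem tsum_yCoeff_sq_eq_iff (w : ℕ → MvPowerSeries ℕ ℂ) {m : ℤ} (hm : m < 0) :
    ∑' p, yCoeff w p * yCoeff w (m - p) = ∑' p, uCoeff w p * uCoeff w (m - p) ↔
      uCoeff w (m - 1) = ∑' k : ℕ, X k * uCoeff w (m - k)
        + (2⁻¹ : ℂ) • ∑' p, uCoeff w p * uCoeff w (m - p) := by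
  rw [tsum_yCoeff_mul_yCoeff w hm]
  constructor <;> intro h
  · linear_combination (norm := module) (-2⁻¹ : ℂ) • h
  · linear_combination (norm := module) (-2 : ℂ) • h

noncomputable def deformationMap (w : ℕ → MvPowerSeries ℕ ℂ) (j : ℕ) : MvPowerSeries ℕ ℂ :=
  ∑' k : ℕ, X k * uCoeff w (-(j + 1 : ℤ) - k)
    + (2⁻¹ : ℂ) • ∑' p, uCoeff w p * uCoeff w (-(j + 1 : ℤ) - p)

theorem forall_tsum_yCoeff_sq_eq_iff (w : ℕ → MvPowerSeries ℕ ℂ) :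
    (∀ m : ℤ, m < 0 →
      ∑' p, yCoeff w p * yCoeff w (m - p) = ∑' p, uCoeff w p * uCoeff w (m - p)) ↔
      deformationMap w = w := by
  rw [funext_iff]
  constructor
  · intro h j
    have hj := (tsum_yCoeff_sq_eq_iff w (by omega)).mp (h (-(j + 1 : ℤ)) (by omega))
    rw [uCoeff_neg_sub_two] at hj
    exact hj.symm
  · intro h m hm
    obtain ⟨j, rfl⟩ : ∃ j : ℕ, m = -(j + 1 : ℤ) := ⟨(-m - 1).toNat, by omega⟩
    rw [tsum_yCoeff_sq_eq_iff w hm, uCoeff_neg_sub_two]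
    exact (h j).symm

theorem coeff_uCoeff_congr {w w' : ℕ → MvPowerSeries ℕ ℂ} {p : ℤ} {e : ℕ →₀ ℕ}
    (h : p ≤ -2 → coeff e (w (p.natAbs - 2)) = coeff e (w' (p.natAbs - 2))) :
    coeff e (uCoeff w p) = coeff e (uCoeff w' p) := by
  unfold uCoeff
  split_ifs with _ hp
  · rfl
  · exact h hp
  · rfl

theorem coeff_deformationMap_congr {w w' : ℕ → MvPowerSeries ℕ ℂ} {j : ℕ} {d : ℕ →₀ ℕ}
    (h : ∀ e i, toLex (e, i) < toLex (d, j) → coeff e (w i) = coeff e (w' i)) :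
    coeff d (deformationMap w j) = coeff d (deformationMap w' j) := by
  have hX (v : ℕ → MvPowerSeries ℕ ℂ) :
      coeff d (∑' k : ℕ, X k * uCoeff v (-(j + 1 : ℤ) - k)) =
        ∑ k ∈ d.support, coeff (d - Finsupp.single k 1) (uCoeff v (-(j + 1 : ℤ) - k)) :=
    MvPowerSeries.coeff_tsum_X_mul _ d
  simp only [deformationMap, map_add, map_smul, hX, (hasSum_uCoeff_mul_uCoeff _ _).tsum_eq,
    map_sum, coeff_mul]
  congr 1
  · refine Finset.sum_congr rfl fun k hk => coeff_uCoeff_congr fun _ => h _ _ ?_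
    exact Prod.Lex.toLex_lt_toLex.mpr (.inl (Finsupp.tsub_single_one_lt hk))
  · congr 1
    refine Finset.sum_congr rfl fun p hp => Finset.sum_congr rfl fun q hq => ?_
    rw [Finset.mem_Ioo] at hp
    rw [Finset.HasAntidiagonal.mem_antidiagonal] at hq
    congr 1 <;> refine coeff_uCoeff_congr fun _ => h _ _ (Prod.Lex.toLex_strictMono
      (Prod.mk_lt_mk_of_le_of_lt ?_ (by omega)))
    · exact hq ▸ le_self_add
    · exact hq ▸ le_add_self

theorem existsUnique_deformationMap_eq : ∃! w, deformationMap w = w := by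
  let coords : (ℕ → MvPowerSeries ℕ ℂ) ≃ ((ℕ →₀ ℕ) × ℕ → ℂ) :=
    { toFun w x := coeff x.1 (w x.2)
      invFun f j := fun d => f (d, j)
      left_inv _ := rfl
      right_inv _ := rfl }
  have key := (InvImage.wf toLex wellFounded_lt).existsUnique_fixedPoint
    (coords ∘ deformationMap ∘ coords.symm) fun _ _ _ h =>
      coeff_deformationMap_congr fun e i => h (e, i)
  refine (coords.existsUnique_congr fun w => ?_).mpr key
  simp [coords.apply_eq_iff_eq]

end SpecialDeformation

/-- There is a unique sequence `w₀, w₁, … ∈ ℂ[[v₀,v₁,…]]` such that the Laurent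
series `y = (1/√2)∑_{n≥0}(v_n − δ_{n,1})z^n + √2/z + √2∑_{n≥0} w_n z^{−n−2}`
satisfies `(y²)_− = (1/z + ∑_{n≥0} w_n z^{−n−2})²`, i.e. such that for every
negative exponent `m` the `z^m`-coefficient of `y²` equals that of the square of
the principal part. -/
theorem special_deformation_unique :
    ∃! w : ℕ → MvPowerSeries ℕ ℂ,
      ∀ m : ℤ, m < 0 →
        (∑' p : ℤ, yCoeff w p * yCoeff w (m - p))
          = ∑' p : ℤ, uCoeff w p * uCoeff w (m - p) := by
  simpa only [SpecialDeformation.forall_tsum_yCoeff_sq_eq_iff] using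
    SpecialDeformation.existsUnique_deformationMap_eq
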